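/- arXiv:2412.12889 — 4 statements merged into one kernel-verified Lean document; each statement's English description precedes it below -/
import Mathlib

section
/- For every integer n ≥ 1 there exists a constant C > 0 depending only on n such that the following holds: for every finite set Σ ⊆ ℤⁿ and every y ∈ ℝⁿ with |y − σ| ≥ 1/2 for all σ ∈ Σ, one has ∑_{σ ∈ Σ} 1/|y − σ|^{n−1} ≤ C·(#Σ)^{1/n}, where #Σ is the cardinality of Σ. -/
/-!
At most `(2R + 1)ⁿ` lattice points lie within distance `R` of `y`. Sorting `Σ` into dyadic shells
`2ᵏ⁻¹ ≤ |y - σ| ≤ 2ᵏ`, shell `k` has `O(2ᵏⁿ)` points, each contributing `O(2⁻ᵏ⁽ⁿ⁻¹⁾)`, so the shells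
up to radius `T ≈ (#Σ)^{1/n}` contribute `O(T)` in total (a geometric series), while the at most
`#Σ` points farther than `T` contribute at most `#Σ / Tⁿ⁻¹ ≤ T`. Only this growth of the counting
function `#{σ | |y - σ| ≤ R} ≤ K Rⁿ` matters.
-/

open Finset

lemma card_Icc_ceil_floor_le {a b : ℝ} (h : a ≤ b) : (#(Icc ⌈a⌉ ⌊b⌋) : ℝ) ≤ b - a + 1 := by
  have hle : ⌈a⌉ ≤ ⌊b⌋ + 1 := (Int.ceil_mono h).trans (Int.ceil_le_floor_add_one b)
  have hcard : ((#(Icc ⌈a⌉ ⌊b⌋) : ℤ) : ℝ) = ⌊b⌋ + 1 - ⌈a⌉ := by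
    exact_mod_cast Int.card_Icc_of_le _ _ hle
  push_cast at hcard
  linarith [Int.floor_le b, Int.le_ceil a]

lemma card_filter_dist_le_le {ι : Type*} [Fintype ι] [DecidableEq ι] (S : Finset (ι → ℤ))
    (y : EuclideanSpace ℝ ι) {R : ℝ} (hR : 0 ≤ R) :
    (#{σ ∈ S | dist y (WithLp.toLp 2 fun i => (σ i : ℝ)) ≤ R} : ℝ) ≤
      (2 * R + 1) ^ Fintype.card ι := by
  set box := Fintype.piFinset fun i => Icc ⌈y i - R⌉ ⌊y i + R⌋
  have hsub : {σ ∈ S | dist y (WithLp.toLp 2 fun i => (σ i : ℝ)) ≤ R} ⊆ box := by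
    intro σ hσ
    rw [mem_filter] at hσ
    refine Fintype.mem_piFinset.2 fun i => ?_
    have hi := (PiLp.dist_apply_le y _ i).trans hσ.2
    rw [Real.dist_eq, abs_le] at hi
    exact mem_Icc.2 ⟨Int.ceil_le.2 (by linarith), Int.le_floor.2 (by linarith)⟩
  calc _ ≤ (#box : ℝ) := by exact_mod_cast card_le_card hsub
    _ = ∏ i, (#(Icc ⌈y i - R⌉ ⌊y i + R⌋) : ℝ) := by simp [box]
    _ ≤ ∏ _i : ι, (2 * R + 1) := prod_le_prod (fun _ _ => by positivity) fun i _ =>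
        (card_Icc_ceil_floor_le (by linarith)).trans_eq (by ring)
    _ = _ := by simp

noncomputable def dyadicLevel (r : ℝ) : ℕ := (Int.clog 2 r).toNat

lemma le_two_pow_dyadicLevel (r : ℝ) : r ≤ 2 ^ dyadicLevel r :=
  calc r ≤ (2 : ℝ) ^ Int.clog 2 r := by exact_mod_cast Int.self_le_zpow_clog one_lt_two r
    _ ≤ (2 : ℝ) ^ (dyadicLevel r : ℤ) := zpow_le_zpow_right₀ one_le_two (Int.self_le_toNat _)
    _ = 2 ^ dyadicLevel r := zpow_natCast _ _

lemma two_pow_dyadicLevel_le {r : ℝ} (hr : 1 / 2 ≤ r) : 2 ^ dyadicLevel r ≤ 2 * r := by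
  rcases le_or_gt (Int.clog 2 r) 0 with h | h
  · simp only [dyadicLevel, Int.toNat_of_nonpos h, pow_zero]
    linarith
  · have hlt : (2 : ℝ) ^ (Int.clog 2 r - 1) < r := by
      simpa using Int.zpow_pred_clog_lt_self (R := ℝ) one_lt_two (by linarith : (0 : ℝ) < r)
    have hcast : ((dyadicLevel r : ℕ) : ℤ) = Int.clog 2 r := Int.toNat_of_nonneg h.le
    rw [zpow_sub₀ two_ne_zero, zpow_one] at hlt
    rw [← zpow_natCast, hcast]
    linarith

section Dyadic

variable {α : Type*} {S : Finset α} {d : α → ℝ} {m : ℕ} {K : ℝ}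

lemma sum_one_div_pow_le_of_le {T : ℝ} (hT : 0 < T) (hd : ∀ σ ∈ S, T ≤ d σ)
    (hS : (#S : ℝ) ≤ T ^ (m + 1)) : ∑ σ ∈ S, 1 / d σ ^ m ≤ T :=
  calc ∑ σ ∈ S, 1 / d σ ^ m ≤ #S • (1 / T ^ m) := sum_le_card_nsmul _ _ _ fun σ hσ =>
        one_div_le_one_div_of_le (by positivity) (pow_le_pow_left₀ hT.le (hd σ hσ) m)
    _ ≤ T ^ (m + 1) * (1 / T ^ m) := by rw [nsmul_eq_mul]; gcongr
    _ = T := by field_simp; ring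

lemma sum_filter_dyadicLevel_eq_le (hd : ∀ σ ∈ S, 1 / 2 ≤ d σ)
    (hcount : ∀ R, 1 ≤ R → (#{σ ∈ S | d σ ≤ R} : ℝ) ≤ K * R ^ (m + 1)) (k : ℕ) :
    ∑ σ ∈ S with dyadicLevel (d σ) = k, 1 / d σ ^ m ≤ K * 2 ^ m * 2 ^ k := by
  have hcard : (#{σ ∈ S | dyadicLevel (d σ) = k} : ℝ) ≤ K * (2 ^ k) ^ (m + 1) := by
    have hsub : {σ ∈ S | dyadicLevel (d σ) = k} ⊆ {σ ∈ S | d σ ≤ 2 ^ k} :=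
      monotone_filter_right S fun σ _ h => h ▸ le_two_pow_dyadicLevel _
    exact (Nat.cast_le.2 (card_le_card hsub)).trans (hcount _ (one_le_pow₀ one_le_two))
  calc ∑ σ ∈ S with dyadicLevel (d σ) = k, 1 / d σ ^ m
      ≤ #{σ ∈ S | dyadicLevel (d σ) = k} • (2 / 2 ^ k) ^ m := by
        refine sum_le_card_nsmul _ _ _ fun σ hσ => ?_
        obtain ⟨hσS, hk⟩ := mem_filter.1 hσ
        have h : (2 : ℝ) ^ k ≤ 2 * d σ := hk ▸ two_pow_dyadicLevel_le (hd σ hσS)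
        rw [← one_div_div (2 ^ k : ℝ) 2, one_div_pow]
        exact one_div_le_one_div_of_le (by positivity) (pow_le_pow_left₀ (by positivity)
          (by linarith) m)
    _ ≤ K * (2 ^ k) ^ (m + 1) * (2 / 2 ^ k) ^ m := by rw [nsmul_eq_mul]; gcongr
    _ = K * 2 ^ m * 2 ^ k := by rw [div_pow, pow_succ]; field_simp

lemma sum_filter_dyadicLevel_le_le (hK : 0 ≤ K) (hd : ∀ σ ∈ S, 1 / 2 ≤ d σ)
    (hcount : ∀ R, 1 ≤ R → (#{σ ∈ S | d σ ≤ R} : ℝ) ≤ K * R ^ (m + 1)) (J : ℕ) :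
    ∑ σ ∈ S with dyadicLevel (d σ) ≤ J, 1 / d σ ^ m ≤ 2 ^ (m + 1) * K * 2 ^ J := by
  rw [← sum_fiberwise_of_maps_to (t := range (J + 1)) (g := fun σ => dyadicLevel (d σ))
    fun σ hσ => mem_range_succ_iff.2 (mem_filter.1 hσ).2]
  calc _ ≤ ∑ k ∈ range (J + 1), K * 2 ^ m * 2 ^ k := by
        refine sum_le_sum fun k _ => le_trans ?_ (sum_filter_dyadicLevel_eq_le hd hcount k)
        refine sum_le_sum_of_subset_of_nonneg (filter_subset_filter _ (filter_subset _ _))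
          fun σ hσ _ => ?_
        have := hd σ (mem_filter.1 hσ).1
        positivity
    _ = K * 2 ^ m * (2 ^ (J + 1) - 1) := by rw [← mul_sum, geom_sum_eq one_lt_two.ne']; ring
    _ ≤ K * 2 ^ m * 2 ^ (J + 1) := by gcongr; linarith
    _ = 2 ^ (m + 1) * K * 2 ^ J := by ring

theorem sum_one_div_pow_le_of_card_filter_le (hd : ∀ σ ∈ S, 1 / 2 ≤ d σ)
    (hcount : ∀ R, 1 ≤ R → (#{σ ∈ S | d σ ≤ R} : ℝ) ≤ K * R ^ (m + 1)) :
    ∑ σ ∈ S, 1 / d σ ^ m ≤ 2 * (2 ^ (m + 1) * K + 1) * (#S : ℝ) ^ ((1 : ℝ) / (m + 1 : ℕ)) := by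
  rcases S.eq_empty_or_nonempty with rfl | hS
  · rw [sum_empty, card_empty, Nat.cast_zero, Real.zero_rpow (by positivity), mul_zero]
  have hK : 0 ≤ K := by simpa using (Nat.cast_nonneg _).trans (hcount 1 le_rfl)
  set T := (#S : ℝ) ^ ((1 : ℝ) / (m + 1 : ℕ)) with hTdef
  have hT : 1 ≤ T := Real.one_le_rpow (by exact_mod_cast hS.card_pos) (by positivity)
  have hTpow : T ^ (m + 1) = #S := by
    rw [hTdef, one_div]; exact Real.rpow_inv_natCast_pow (by positivity) (by omega)
  set J := dyadicLevel T
  have hfar : ∑ σ ∈ S with ¬dyadicLevel (d σ) ≤ J, 1 / d σ ^ m ≤ 2 ^ J := by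
    refine sum_one_div_pow_le_of_le (by positivity) (fun σ hσ => ?_) ?_
    · obtain ⟨hσS, hlt⟩ := mem_filter.1 hσ
      have := (pow_le_pow_right₀ one_le_two (not_le.1 hlt)).trans
        (two_pow_dyadicLevel_le (hd σ hσS))
      rw [pow_succ] at this
      linarith
    · calc (#{σ ∈ S | ¬dyadicLevel (d σ) ≤ J} : ℝ) ≤ #S := mod_cast card_filter_le _ _
        _ = T ^ (m + 1) := hTpow.symm
        _ ≤ (2 ^ J) ^ (m + 1) := by gcongr; exact le_two_pow_dyadicLevel T
  have hJ : (2 : ℝ) ^ J ≤ 2 * T := two_pow_dyadicLevel_le (by linarith)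
  rw [← sum_filter_add_sum_filter_not S fun σ => dyadicLevel (d σ) ≤ J]
  calc _ ≤ 2 ^ (m + 1) * K * 2 ^ J + 2 ^ J :=
        add_le_add (sum_filter_dyadicLevel_le_le hK hd hcount J) hfar
    _ = (2 ^ (m + 1) * K + 1) * 2 ^ J := by ring
    _ ≤ (2 ^ (m + 1) * K + 1) * (2 * T) := by gcongr
    _ = _ := by ring

end Dyadic

/-- For every integer `n ≥ 1` there exists a constant `C > 0` depending only on `n` such that
for every finite set `Σ ⊆ ℤⁿ` and every `y ∈ ℝⁿ` with `|y − σ| ≥ 1/2` for all `σ ∈ Σ`, one has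
`∑_{σ ∈ Σ} 1/|y − σ|^{n−1} ≤ C·(#Σ)^{1/n}`. -/
theorem stmt_1 (n : ℕ) (hn : 1 ≤ n) :
    ∃ C : ℝ, 0 < C ∧
      ∀ (S : Finset (Fin n → ℤ)) (y : EuclideanSpace ℝ (Fin n)),
        (∀ σ ∈ S, (1 : ℝ) / 2 ≤
          dist y (show EuclideanSpace ℝ (Fin n) from WithLp.toLp 2 (fun i => (σ i : ℝ)))) →
        ∑ σ ∈ S, 1 / (dist y (show EuclideanSpace ℝ (Fin n) from WithLp.toLp 2 (fun i => (σ i : ℝ)))) ^ (n - 1)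
          ≤ C * (S.card : ℝ) ^ ((1 : ℝ) / n) := by
  obtain ⟨m, rfl⟩ := Nat.exists_eq_add_of_le' hn
  refine ⟨2 * (2 ^ (m + 1) * 3 ^ (m + 1) + 1), by positivity, fun S y hy => ?_⟩
  rw [Nat.add_sub_cancel]
  refine sum_one_div_pow_le_of_card_filter_le hy fun R hR => ?_
  calc _ ≤ (2 * R + 1) ^ (m + 1) := by
        simpa using card_filter_dist_le_le S y (by linarith : 0 ≤ R)
    _ ≤ (3 * R) ^ (m + 1) := by gcongr; linarith
    _ = 3 ^ (m + 1) * R ^ (m + 1) := mul_pow _ _ _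
end

section
/- Let M be a metric space with geodesic points. Given finitely many open balls B(a₁, ρ₁), …, B(a_J, ρ_J) in M with all ρ_j > 0, there exist finitely many points b₁, …, b_K ∈ M and radii r₁, …, r_K > 0 such that the closed balls B̄(b₁, r₁), …, B̄(b_K, r_K) are pairwise disjoint, the union of the open balls B(b₁, r₁), …, B(b_K, r_K) contains B(a₁, ρ₁) ∪ ⋯ ∪ B(a_J, ρ_J), and r₁ + ⋯ + r_K ≤ ρ₁ + ⋯ + ρ_J. -/
/-!
If two of the closed balls meet, their centres are at distance at most `ρ + ρ'`, and
walking from one centre towards the other (geodesic points) gives a point `c` with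
`B(a, ρ) ∪ B(a', ρ') ⊆ B(c, ρ + ρ')`. Replacing the two balls by this one keeps the union
covered and does not increase the sum of the radii, while it decreases the number of
balls; so after finitely many merges the closed balls are pairwise disjoint.
-/

open Metric Finset

theorem Finset.sum_insert_le_add {ι R : Type*} [DecidableEq ι] [AddCommMonoid R] [PartialOrder R]
    [IsOrderedAddMonoid R] {s : Finset ι} {f : ι → R} {a : ι} (ha : 0 ≤ f a) :
    ∑ i ∈ insert a s, f i ≤ f a + ∑ i ∈ s, f i := by
  by_cases h : a ∈ s
  · rw [Finset.insert_eq_of_mem h]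
    exact le_add_of_nonneg_left ha
  · rw [sum_insert h]

def HasGeodesicPoints (M : Type*) [MetricSpace M] : Prop :=
  ∀ x y : M, ∀ s t : ℝ, 0 ≤ s → 0 ≤ t → s + t = dist x y →
    ∃ z : M, dist x z = s ∧ dist z y = t

section

variable {M : Type*} [MetricSpace M]

theorem HasGeodesicPoints.exists_ball_union_subset_ball (hM : HasGeodesicPoints M) {x y : M}
    {r s : ℝ} (h : ¬Disjoint (closedBall x r) (closedBall y s)) :
    ∃ c, ball x r ∪ ball y s ⊆ ball c (r + s) := by
  obtain ⟨z, hzx, hzy⟩ := Set.not_disjoint_iff.mp h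
  rw [mem_closedBall] at hzx hzy
  have hxy : dist x y ≤ r + s := (dist_triangle_left x y z).trans (add_le_add hzx hzy)
  have hs : 0 ≤ s := dist_nonneg.trans hzy
  have hr : 0 ≤ r := dist_nonneg.trans hzx
  -- walk from `x` towards `y` as far as `s` allows; the remaining distance to `y` is at most `r`
  set t := min (dist x y) s
  obtain ⟨c, hxc, hcy⟩ := hM x y t (dist x y - t) (le_min dist_nonneg hs)
    (sub_nonneg.mpr (min_le_left _ _)) (add_sub_cancel _ _)
  refine ⟨c, Set.union_subset (ball_subset_ball' ?_) (ball_subset_ball' ?_)⟩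
  · linarith [min_le_right (dist x y) s]
  · rw [dist_comm, hcy]
    rcases le_total (dist x y) s with hle | hle
    · linarith [min_eq_left hle]
    · linarith [min_eq_right hle]

def IsCheaperBallCover (T S : Finset (M × ℝ)) : Prop :=
  (⋃ p ∈ S, ball p.1 p.2) ⊆ (⋃ p ∈ T, ball p.1 p.2) ∧ ∑ p ∈ T, p.2 ≤ ∑ p ∈ S, p.2

theorem IsCheaperBallCover.refl (S : Finset (M × ℝ)) : IsCheaperBallCover S S :=
  ⟨subset_rfl, le_rfl⟩

theorem IsCheaperBallCover.trans {T S R : Finset (M × ℝ)} (hTS : IsCheaperBallCover T S)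
    (hSR : IsCheaperBallCover S R) : IsCheaperBallCover T R :=
  ⟨hSR.1.trans hTS.1, hTS.2.trans hSR.2⟩

theorem HasGeodesicPoints.exists_card_lt_cheaperBallCover (hM : HasGeodesicPoints M)
    {S : Finset (M × ℝ)} (hS : ∀ p ∈ S, 0 < p.2)
    (hS' : ¬(S : Set (M × ℝ)).PairwiseDisjoint fun p ↦ closedBall p.1 p.2) :
    ∃ T : Finset (M × ℝ), #T < #S ∧ (∀ p ∈ T, 0 < p.2) ∧ IsCheaperBallCover T S := by
  classical
  obtain ⟨p, hp, q, hq, hpq, hnd⟩ : ∃ p ∈ S, ∃ q ∈ S, p ≠ q ∧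
      ¬Disjoint (closedBall p.1 p.2) (closedBall q.1 q.2) := by
    simpa [Set.PairwiseDisjoint, Set.Pairwise, Function.onFun] using hS'
  obtain ⟨c, hc⟩ := hM.exists_ball_union_subset_ball hnd
  have hq' : q ∈ S.erase p := mem_erase.mpr ⟨hpq.symm, hq⟩
  have hcard : #((S.erase p).erase q) + 1 < #S := by
    have := card_erase_lt_of_mem hp
    have := card_erase_lt_of_mem hq'
    omega
  set R := (S.erase p).erase q
  refine ⟨insert (c, p.2 + q.2) R, ?_, ?_, ?_, ?_⟩
  · exact (card_insert_le _ R).trans_lt hcard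
  · simp only [mem_insert, forall_eq_or_imp]
    exact ⟨add_pos (hS p hp) (hS q hq),
      fun u hu ↦ hS u (mem_of_mem_erase (mem_of_mem_erase hu))⟩
  · intro x hx
    simp only [Set.mem_iUnion] at hx ⊢
    obtain ⟨u, hu, hxu⟩ := hx
    by_cases hupq : u = p ∨ u = q
    · refine ⟨_, mem_insert_self _ _, hc ?_⟩
      rcases hupq with rfl | rfl
      exacts [Or.inl hxu, Or.inr hxu]
    · rw [not_or] at hupq
      exact ⟨u, mem_insert_of_mem (mem_erase.mpr ⟨hupq.2, mem_erase.mpr ⟨hupq.1, hu⟩⟩), hxu⟩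
  · calc ∑ u ∈ insert (c, p.2 + q.2) R, u.2 ≤ p.2 + q.2 + ∑ u ∈ R, u.2 :=
          sum_insert_le_add (add_pos (hS p hp) (hS q hq)).le
      _ = ∑ u ∈ S, u.2 := by
          rw [add_assoc, add_sum_erase _ _ hq', add_sum_erase _ _ hp]

theorem HasGeodesicPoints.exists_pairwise_disjoint_cheaperBallCover (hM : HasGeodesicPoints M)
    (S : Finset (M × ℝ)) (hS : ∀ p ∈ S, 0 < p.2) :
    ∃ T : Finset (M × ℝ), (∀ p ∈ T, 0 < p.2) ∧
      (T : Set (M × ℝ)).PairwiseDisjoint (fun p ↦ closedBall p.1 p.2) ∧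
      IsCheaperBallCover T S := by
  induction hn : #S using Nat.strong_induction_on generalizing S with
  | _ n ih =>
    by_cases hdisj : (S : Set (M × ℝ)).PairwiseDisjoint fun p ↦ closedBall p.1 p.2
    · exact ⟨S, hS, hdisj, .refl S⟩
    · obtain ⟨R, hRS, hR, hRS'⟩ := hM.exists_card_lt_cheaperBallCover hS hdisj
      obtain ⟨T, hT, hTdisj, hTR⟩ := ih _ (hn ▸ hRS) R hR rfl
      exact ⟨T, hT, hTdisj, hTR.trans hRS'⟩

end

/-- In a metric space with geodesic points, finitely many open balls can be covered by
finitely many open balls whose closures are pairwise disjoint and whose radii have a sum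
not exceeding the sum of the original radii. -/
theorem stmt_3 {M : Type*} [MetricSpace M]
    (hgeo : ∀ x y : M, ∀ s t : ℝ, 0 ≤ s → 0 ≤ t → s + t = dist x y →
      ∃ z : M, dist x z = s ∧ dist z y = t)
    (J : ℕ) (a : Fin J → M) (ρ : Fin J → ℝ) (hρ : ∀ j, 0 < ρ j) :
    ∃ (K : ℕ) (b : Fin K → M) (r : Fin K → ℝ),
      (∀ k, 0 < r k) ∧
      (∀ k k', k ≠ k' →
        Disjoint (Metric.closedBall (b k) (r k)) (Metric.closedBall (b k') (r k'))) ∧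
      (⋃ j, Metric.ball (a j) (ρ j)) ⊆ (⋃ k, Metric.ball (b k) (r k)) ∧
      ∑ k, r k ≤ ∑ j, ρ j := by
  classical
  obtain ⟨T, hT, hTdisj, hcover, hsum⟩ :=
    HasGeodesicPoints.exists_pairwise_disjoint_cheaperBallCover hgeo
      (univ.image fun j ↦ (a j, ρ j)) (by simpa using hρ)
  let f : Fin #T → M × ℝ := fun k ↦ T.equivFin.symm k
  have hf : ∀ k, f k ∈ T := fun k ↦ (T.equivFin.symm k).2
  refine ⟨#T, fun k ↦ (f k).1, fun k ↦ (f k).2, fun k ↦ hT _ (hf k),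
    fun k k' hkk' ↦ hTdisj (hf k) (hf k')
      (Subtype.val_injective.ne (T.equivFin.symm.injective.ne hkk')), ?_, ?_⟩
  · have hcover' : ⋃ j, ball (a j) (ρ j) ⊆ ⋃ p ∈ T, ball p.1 p.2 := by simpa using hcover
    refine hcover'.trans (Set.iUnion₂_subset fun p hp ↦ ?_)
    exact Set.subset_iUnion_of_subset (T.equivFin ⟨p, hp⟩) (by simp [f])
  · calc ∑ k, (f k).2 = ∑ p ∈ T, p.2 :=
          (T.equivFin.symm.sum_comp fun p ↦ p.1.2).trans (sum_coe_sort T _)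
      _ ≤ _ := hsum
      _ ≤ ∑ j, ρ j := sum_image_le_of_nonneg (by simpa using fun j ↦ (hρ j).le)
end

section
/- Let n, m ≥ 1 and W(θ, z) = ∏_{j=1}^{n} cos²(θ_j/2) + ∑_{j=1}^{m} z_j². Let θ ∈ ℝⁿ with θ ≠ 0 and |θ_j| ≤ π for all j, let z ∈ ℝᵐ, and suppose W(θ, z) > 0. For t ∈ [0, 1] set s(t) := 1 + t(π/‖θ‖_∞ − 1), where ‖θ‖_∞ = max_j |θ_j|. Then for all 0 ≤ t₀ < t₁ ≤ 1 one has W(s(t₁)·θ, (1 − t₁)·z) < W(s(t₀)·θ, (1 − t₀)·z); that is, W is strictly decreasing along the deformation Θ(t, (θ, z)) := (s(t)θ, (1 − t)z) at every point not in the zero set of W. -/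
/-!
Since `cos² (x / 2) = (1 + cos x) / 2`, each factor of the product is the even function
`(1 + cos x) / 2`, which decreases on `[0, π]`. Along the deformation every `θⱼ` is scaled by
`s(t) ≥ 1`, which increases from `1` to `π / ‖θ‖`, so `|s(t) θⱼ| ≤ π` stays in the range where the
factors decrease, while the `z`-part is multiplied by `(1 - t)²`. If `z ≠ 0` the `z`-part decreases
strictly. If `z = 0`, positivity of `W` forces `‖θ‖ < π`, so `s` is strictly increasing, the factor
at a nonzero `θⱼ` decreases strictly and the other factors stay positive before time `1`.
-/

open Real Finset

lemma Finset.prod_lt_prod_of_nonneg {ι R : Type*} [CommSemiring R] [PartialOrder R]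
    [IsStrictOrderedRing R] {s : Finset ι} {f g : ι → R} (hf : ∀ i ∈ s, 0 ≤ f i)
    (hg : ∀ i ∈ s, 0 < g i) (hfg : ∀ i ∈ s, f i ≤ g i) (hlt : ∃ i ∈ s, f i < g i) :
    ∏ i ∈ s, f i < ∏ i ∈ s, g i := by
  classical
  obtain ⟨i, hi, hfgi⟩ := hlt
  rw [← mul_prod_erase s f hi, ← mul_prod_erase s g hi]
  exact mul_lt_mul_of_lt_of_le_of_nonneg_of_pos hfgi
    (prod_le_prod (fun j hj ↦ hf j (mem_of_mem_erase hj)) fun j hj ↦ hfg j (mem_of_mem_erase hj))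
    (hf i hi) (prod_pos fun j hj ↦ hg j (mem_of_mem_erase hj))

namespace Real

lemma cos_sq_half (x : ℝ) : cos (x / 2) ^ 2 = (1 + cos x) / 2 := by
  rw [cos_sq, mul_div_cancel₀ x two_ne_zero]
  ring

lemma neg_one_lt_cos_of_abs_lt {x : ℝ} (hx : |x| < π) : -1 < cos x := by
  rw [← cos_abs, ← cos_pi]
  exact strictAntiOn_cos ⟨abs_nonneg x, hx.le⟩ ⟨pi_pos.le, le_rfl⟩ hx

lemma cos_mul_abs {a : ℝ} (ha : 0 ≤ a) (x : ℝ) : cos (a * |x|) = cos (a * x) := by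
  rw [← cos_abs (a * x), abs_mul, abs_of_nonneg ha]

lemma cos_mul_le_cos_mul {a b x : ℝ} (ha : 0 ≤ a) (hab : a ≤ b) (hb : b * |x| ≤ π) :
    cos (b * x) ≤ cos (a * x) := by
  have hax : a * |x| ≤ b * |x| := mul_le_mul_of_nonneg_right hab (abs_nonneg x)
  rw [← cos_mul_abs ha, ← cos_mul_abs (ha.trans hab)]
  exact antitoneOn_cos ⟨by positivity, hax.trans hb⟩ ⟨(by positivity : 0 ≤ a * |x|).trans hax, hb⟩
    hax

lemma cos_mul_lt_cos_mul {a b x : ℝ} (ha : 0 ≤ a) (hab : a < b) (hx : x ≠ 0)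
    (hb : b * |x| ≤ π) : cos (b * x) < cos (a * x) := by
  have hax : a * |x| < b * |x| := mul_lt_mul_of_pos_right hab (abs_pos.2 hx)
  rw [← cos_mul_abs ha, ← cos_mul_abs (ha.trans hab.le)]
  exact strictAntiOn_cos ⟨by positivity, hax.le.trans hb⟩
    ⟨(by positivity : 0 ≤ a * |x|).trans hax.le, hb⟩ hax

end Real

section Deformation

variable {ι : Type*} [Fintype ι] {θ : ι → ℝ}

lemma one_add_cos_div_two_nonneg (x : ℝ) : 0 ≤ (1 + cos x) / 2 := by
  linarith [neg_one_le_cos x]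

lemma prod_one_add_cos_mul_le {a b : ℝ} (ha : 0 ≤ a) (hab : a ≤ b) (hb : ∀ j, b * |θ j| ≤ π) :
    ∏ j, (1 + cos (b * θ j)) / 2 ≤ ∏ j, (1 + cos (a * θ j)) / 2 :=
  prod_le_prod (fun j _ ↦ one_add_cos_div_two_nonneg _) fun j _ ↦ by
    linarith [cos_mul_le_cos_mul ha hab (hb j)]

lemma prod_one_add_cos_mul_lt {a b : ℝ} (ha : 0 ≤ a) (hab : a < b) (hθ : θ ≠ 0)
    (ha' : ∀ j, a * |θ j| < π) (hb : ∀ j, b * |θ j| ≤ π) :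
    ∏ j, (1 + cos (b * θ j)) / 2 < ∏ j, (1 + cos (a * θ j)) / 2 := by
  obtain ⟨i, hi⟩ := Function.ne_iff.1 hθ
  refine prod_lt_prod_of_nonneg (fun j _ ↦ one_add_cos_div_two_nonneg _) (fun j _ ↦ ?_)
    (fun j _ ↦ ?_) ⟨i, mem_univ i, ?_⟩
  · have : -1 < cos (a * θ j) := by
      refine neg_one_lt_cos_of_abs_lt ?_
      rw [abs_mul, abs_of_nonneg ha]
      exact ha' j
    linarith
  · linarith [cos_mul_le_cos_mul ha hab.le (hb j)]
  · linarith [cos_mul_lt_cos_mul ha hab hi (hb i)]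

lemma norm_lt_pi_of_prod_one_add_cos_pos (hθπ : ∀ j, |θ j| ≤ π)
    (hpos : 0 < ∏ j, (1 + cos (θ j)) / 2) : ‖θ‖ < π := by
  refine (pi_norm_lt_iff pi_pos).2 fun j ↦ (hθπ j).lt_of_ne fun hj ↦ hpos.ne' ?_
  refine prod_eq_zero (mem_univ j) ?_
  rw [← cos_abs, hj, cos_pi]
  norm_num

lemma deformScale_mul_abs_le (hθ : θ ≠ 0) (hθπ : ‖θ‖ ≤ π) {t : ℝ} (ht : 0 ≤ t) (j : ι) :
    (1 + t * (π / ‖θ‖ - 1)) * |θ j| ≤ ‖θ‖ + t * (π - ‖θ‖) := by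
  have hN : 0 < ‖θ‖ := norm_pos_iff.2 hθ
  have hc : 1 ≤ π / ‖θ‖ := (one_le_div hN).2 hθπ
  calc (1 + t * (π / ‖θ‖ - 1)) * |θ j| ≤ (1 + t * (π / ‖θ‖ - 1)) * ‖θ‖ :=
        mul_le_mul_of_nonneg_left (norm_le_pi_norm θ j) (by nlinarith)
    _ = ‖θ‖ + t * (π - ‖θ‖) := by field_simp

lemma prod_one_add_cos_deformScale_le (hθ : θ ≠ 0) (hθπ : ‖θ‖ ≤ π) {t₀ t₁ : ℝ} (ht₀ : 0 ≤ t₀)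
    (ht : t₀ ≤ t₁) (ht₁ : t₁ ≤ 1) :
    ∏ j, (1 + cos ((1 + t₁ * (π / ‖θ‖ - 1)) * θ j)) / 2
      ≤ ∏ j, (1 + cos ((1 + t₀ * (π / ‖θ‖ - 1)) * θ j)) / 2 := by
  have hc : 1 ≤ π / ‖θ‖ := (one_le_div (norm_pos_iff.2 hθ)).2 hθπ
  refine prod_one_add_cos_mul_le (by nlinarith) (by nlinarith) fun j ↦ ?_
  nlinarith [deformScale_mul_abs_le hθ hθπ (ht₀.trans ht) j]

lemma prod_one_add_cos_deformScale_lt (hθ : θ ≠ 0) (hθπ : ‖θ‖ < π) {t₀ t₁ : ℝ} (ht₀ : 0 ≤ t₀)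
    (ht : t₀ < t₁) (ht₁ : t₁ ≤ 1) :
    ∏ j, (1 + cos ((1 + t₁ * (π / ‖θ‖ - 1)) * θ j)) / 2
      < ∏ j, (1 + cos ((1 + t₀ * (π / ‖θ‖ - 1)) * θ j)) / 2 := by
  have hc : 1 < π / ‖θ‖ := (one_lt_div (norm_pos_iff.2 hθ)).2 hθπ
  refine prod_one_add_cos_mul_lt (by nlinarith) (by nlinarith) hθ (fun j ↦ ?_) fun j ↦ ?_
  · nlinarith [deformScale_mul_abs_le hθ hθπ.le ht₀ j]
  · nlinarith [deformScale_mul_abs_le hθ hθπ.le (ht₀.trans ht.le) j]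

end Deformation

theorem stmt_6_general (n m : ℕ)
    (W : (Fin n → ℝ) → (Fin m → ℝ) → ℝ)
    (hW : ∀ θ z, W θ z = (∏ j, Real.cos (θ j / 2) ^ 2) + ∑ j, (z j) ^ 2)
    (θ : Fin n → ℝ) (hθ : θ ≠ 0) (hθπ : ∀ j, |θ j| ≤ Real.pi)
    (z : Fin m → ℝ) (hpos : 0 < W θ z)
    (t₀ t₁ : ℝ) (ht₀ : 0 ≤ t₀) (ht : t₀ < t₁) (ht₁ : t₁ ≤ 1) :
    W (fun j => (1 + t₁ * (Real.pi / ‖θ‖ - 1)) * θ j) (fun j => (1 - t₁) * z j)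
      < W (fun j => (1 + t₀ * (Real.pi / ‖θ‖ - 1)) * θ j) (fun j => (1 - t₀) * z j) := by
  simp only [hW, Real.cos_sq_half, mul_pow, ← mul_sum] at hpos ⊢
  have hnorm : ‖θ‖ ≤ π := (pi_norm_le_iff_of_nonneg pi_pos.le).2 hθπ
  rcases (sum_nonneg fun j _ ↦ sq_nonneg (z j)).eq_or_lt with hz | hz
  · rw [← hz] at hpos ⊢
    simp only [mul_zero, add_zero] at hpos ⊢
    exact prod_one_add_cos_deformScale_lt hθ (norm_lt_pi_of_prod_one_add_cos_pos hθπ hpos)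
      ht₀ ht ht₁
  · have hshrink : (1 - t₁) ^ 2 < (1 - t₀) ^ 2 := by nlinarith
    exact add_lt_add_of_le_of_lt (prod_one_add_cos_deformScale_le hθ hnorm ht₀ ht.le ht₁)
      (mul_lt_mul_of_pos_right hshrink hz)

/-- Let `W(θ, z) = ∏ⱼ cos²(θⱼ/2) + ∑ⱼ zⱼ²`. For `θ ≠ 0` with `|θⱼ| ≤ π` for all `j`,
`z ∈ ℝᵐ` and `W(θ, z) > 0`, setting `s(t) = 1 + t(π/‖θ‖_∞ − 1)`, the function
`t ↦ W(s(t)θ, (1−t)z)` is strictly decreasing on `[0, 1]`.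
(Here `‖θ‖` is the sup norm `max_j |θ j|` on `Fin n → ℝ`.) -/
theorem stmt_6 (n m : ℕ) (hn : 1 ≤ n) (hm : 1 ≤ m)
    (W : (Fin n → ℝ) → (Fin m → ℝ) → ℝ)
    (hW : ∀ θ z, W θ z = (∏ j, Real.cos (θ j / 2) ^ 2) + ∑ j, (z j) ^ 2)
    (θ : Fin n → ℝ) (hθ : θ ≠ 0) (hθπ : ∀ j, |θ j| ≤ Real.pi)
    (z : Fin m → ℝ) (hpos : 0 < W θ z)
    (t₀ t₁ : ℝ) (ht₀ : 0 ≤ t₀) (ht : t₀ < t₁) (ht₁ : t₁ ≤ 1) :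
    W (fun j => (1 + t₁ * (Real.pi / ‖θ‖ - 1)) * θ j) (fun j => (1 - t₁) * z j)
      < W (fun j => (1 + t₀ * (Real.pi / ‖θ‖ - 1)) * θ j) (fun j => (1 - t₀) * z j) :=
  stmt_6_general n m W hW θ hθ hθπ z hpos t₀ t₁ ht₀ ht ht₁
end

section
/- Let n, m ≥ 1 and λ ∈ (0, 1). Set A' := V⁻¹((0, λ]) = {p : 0 < V(p) ≤ λ} and N_λ := V⁻¹({λ}), both with the subspace topology. Then N_λ is a strong deformation retract of A': there exists a continuous map H : [0, 1] × A' → A' such that H(0, a) = a for all a ∈ A', V(H(1, a)) = λ for all a ∈ A', and H(t, a) = a for all t ∈ [0, 1] and all a ∈ A' with V(a) = λ. -/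
/-!
Write `V(x, z) = P(x) + ‖z‖²` with `P(x) = ∏ⱼ (1 + cos xⱼ)/2 ∈ [0, 1]`. For `c ≥ 1` with
`c V ≤ λ < 1` there is a map `Φ_c` with `V ∘ Φ_c = c V`: it scales `z` by `√c` and raises each
factor `(1 + cos xⱼ)/2 = cos²(xⱼ/2)` to the power `s = 1 + log c / log P`, so that `P ↦ P^s = c P`;
on angles this keeps the sign of `xⱼ` and replaces `cos(xⱼ/2)` by `cos(xⱼ/2)^s`. The homotopy is
`H(t, a) = Φ_{(λ / V a)^t}(a)`. It is continuous: `s → 1` where `P → 0` because `1 / log P → 0`,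
and on a single angle the sign is only discontinuous at `0` and `π`, where the new angle is `0`,
respectively `±π`.
-/

open Real Filter Topology Set

lemma Real.Angle.continuousAt_toReal {θ : Angle} (hθ : θ ≠ π) : ContinuousAt Angle.toReal θ := by
  have : Fact (0 < 2 * π) := ⟨two_pi_pos⟩
  have hθ' : θ ≠ ((-π : ℝ) : AddCircle (2 * π)) := by
    change θ ≠ ((-π : ℝ) : Angle); rwa [Angle.coe_neg, Angle.neg_coe_pi]
  exact continuous_subtype_val.continuousAt.comp (AddCircle.continuousAt_equivIoc _ _ hθ')

lemma Real.Angle.sqrt_one_add_cos_div_two (θ : Angle) :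
    √((1 + θ.cos) / 2) = Real.cos (θ.toReal / 2) := by
  rw [cos_half (by linarith [θ.neg_pi_lt_toReal]) θ.toReal_le_pi, Angle.cos_toReal]

lemma one_add_cos_div_two_nonneg_s8 (θ : Angle) : 0 ≤ (1 + θ.cos) / 2 := by
  linarith [θ.cos_toReal ▸ neg_one_le_cos θ.toReal]

lemma tendsto_sign_mul_of_tendsto_zero {α : Type*} {l : Filter α} {f g : α → ℝ}
    (hg : Tendsto g l (𝓝 0)) : Tendsto (fun a => (SignType.sign (f a) : ℝ) * g a) l (𝓝 0) := by
  refine squeeze_zero_norm (fun a => ?_) (by simpa using hg.norm)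
  rw [norm_mul]
  refine mul_le_of_le_one_left (norm_nonneg (g a)) ?_
  rcases lt_trichotomy (f a) 0 with h | h | h <;> simp [h]

/-- The angle `φ` with the sign of `θ` and `cos (φ / 2) = cos (θ / 2) ^ s`, half-angles being
taken in `(-π/2, π/2]`. -/
noncomputable def angleRpow (s : ℝ) (θ : Angle) : Angle :=
  (SignType.sign θ.toReal * (2 * arccos (√((1 + θ.cos) / 2) ^ s)) : ℝ)

lemma one_add_cos_angleRpow_div_two {s : ℝ} (hs : 0 ≤ s) (θ : Angle) :
    (1 + (angleRpow s θ).cos) / 2 = ((1 + θ.cos) / 2) ^ s := by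
  obtain ⟨c, hc⟩ : ∃ c, √((1 + θ.cos) / 2) = c := ⟨_, rfl⟩
  have hc0 : 0 ≤ c := hc ▸ sqrt_nonneg _
  have hc1 : c ≤ 1 := by
    rw [← hc, Angle.sqrt_one_add_cos_div_two]; exact cos_le_one _
  have hc2 : (1 + θ.cos) / 2 = c ^ 2 := by rw [← hc, sq_sqrt (one_add_cos_div_two_nonneg_s8 θ)]
  have hcos_two_mul : cos (2 * arccos (c ^ s)) = 2 * (c ^ s) ^ 2 - 1 := by
    rw [cos_two_mul, cos_arccos (by linarith [rpow_nonneg hc0 s]) (rpow_le_one hc0 hc1 hs)]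
  rw [angleRpow, Angle.cos_coe, hc, hc2, ← rpow_pow_comm hc0]
  rcases lt_trichotomy θ.toReal 0 with h | h | h
  · rw [sign_neg h, SignType.coe_neg_one, neg_one_mul, cos_neg, hcos_two_mul]; ring
  · rw [Angle.toReal_eq_zero_iff.1 h] at hc
    norm_num at hc
    simp [h, ← hc]
  · rw [sign_pos h, SignType.coe_one, one_mul, hcos_two_mul]; ring

lemma angleRpow_one (θ : Angle) : angleRpow 1 θ = θ := by
  have h : arccos (cos (θ.toReal / 2)) = |θ.toReal| / 2 := by
    rw [← cos_abs, abs_div, abs_two, arccos_cos (by positivity)]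
    linarith [abs_le.2 ⟨θ.neg_pi_lt_toReal.le, θ.toReal_le_pi⟩, pi_pos]
  rw [angleRpow, rpow_one, Angle.sqrt_one_add_cos_div_two, h, mul_div_cancel₀ _ two_ne_zero,
    sign_mul_abs, Angle.coe_toReal]

lemma continuousAt_angleRpow {s : ℝ} (hs : 0 < s) (θ : Angle) :
    ContinuousAt (fun q : ℝ × Angle => angleRpow q.1 q.2) (s, θ) := by
  set A : ℝ × Angle → ℝ := fun q => 2 * arccos (√((1 + q.2.cos) / 2) ^ q.1)
  have hA : ContinuousAt A (s, θ) := by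
    refine continuous_const.continuousAt.mul (continuous_arccos.continuousAt.comp ?_)
    have hcos : Continuous fun q : ℝ × Angle => √((1 + q.2.cos) / 2) :=
      ((continuous_const.add (Angle.continuous_cos.comp continuous_snd)).div_const 2).sqrt
    exact hcos.continuousAt.rpow continuousAt_fst (Or.inr hs)
  show ContinuousAt (fun q : ℝ × Angle => ((SignType.sign q.2.toReal * A q : ℝ) : Angle)) (s, θ)
  by_cases hπ : θ = π
  · -- `A = π` at `θ = π`, and there the sign of `θ.toReal` does not matter
    subst hπ
    have hAπ : A (s, π) = π := by
      simp [A, zero_rpow hs.ne', mul_div_cancel₀]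
    have hsplit : ∀ᶠ q : ℝ × Angle in 𝓝 (s, π),
        ((SignType.sign q.2.toReal * A q : ℝ) : Angle) =
          ((SignType.sign q.2.toReal * (A q - π) : ℝ) : Angle) + π := by
      filter_upwards [continuousAt_snd.eventually_ne Angle.pi_ne_zero] with q hq
      rcases lt_or_gt_of_ne (Angle.toReal_eq_zero_iff.not.2 hq) with h | h
      · simp only [sign_neg h, SignType.coe_neg_one, neg_one_mul, Angle.coe_neg, neg_sub,
          Angle.coe_sub]
        rw [sub_add_eq_add_sub, Angle.coe_pi_add_coe_pi, zero_sub]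
      · simp [sign_pos h, Angle.coe_sub]
    have hlim : Tendsto (fun q : ℝ × Angle => (SignType.sign q.2.toReal : ℝ) * (A q - π))
        (𝓝 (s, π)) (𝓝 0) :=
      tendsto_sign_mul_of_tendsto_zero (by simpa [hAπ] using hA.tendsto.sub_const π)
    rw [ContinuousAt, Angle.toReal_pi, sign_pos pi_pos, hAπ, SignType.coe_one, one_mul]
    refine Tendsto.congr' (hsplit.mono fun _ h => h.symm) ?_
    simpa using ((Angle.continuous_coe.tendsto 0).comp hlim).add_const (π : Angle)
  by_cases h0 : θ = 0
  · subst h0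
    have hA0 : A (s, 0) = 0 := by norm_num [A]
    simpa [ContinuousAt, hA0, Function.comp_def] using
      (Angle.continuous_coe.tendsto 0).comp (tendsto_sign_mul_of_tendsto_zero (hA0 ▸ hA.tendsto))
  · have htoReal : ContinuousAt (fun q : ℝ × Angle => q.2.toReal) (s, θ) :=
      (Angle.continuousAt_toReal hπ).comp continuousAt_snd
    have hsign : ContinuousAt (fun q : ℝ × Angle => SignType.sign q.2.toReal) (s, θ) :=
      (continuousAt_sign_of_ne_zero (Angle.toReal_eq_zero_iff.not.2 h0)).comp
        (f := fun q : ℝ × Angle => q.2.toReal) htoReal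
    have hsign' : ContinuousAt (fun q : ℝ × Angle => (SignType.sign q.2.toReal : ℝ)) (s, θ) :=
      (continuous_of_discreteTopology (f := ((↑) : SignType → ℝ))).continuousAt.comp hsign
    exact Angle.continuous_coe.continuousAt.comp (hsign'.mul hA)

lemma Real.continuousAt_inv_log {x : ℝ} (h₁ : x ≠ 1) (h₂ : x ≠ -1) :
    ContinuousAt (fun x => (log x)⁻¹) x := by
  rcases eq_or_ne x 0 with rfl | h₀
  · exact continuousWithinAt_compl_self.1 <| by
      simpa [ContinuousWithinAt, Function.comp_def] using
        tendsto_inv_atBot_zero.comp tendsto_log_nhdsNE_zero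
  · exact (continuousAt_log h₀).inv₀ (log_ne_zero.2 ⟨h₀, h₁, h₂⟩)

lemma Real.rpow_one_add_log_div_log {x c : ℝ} (hx₀ : 0 ≤ x) (hx₁ : x < 1) (hc : 0 < c) :
    x ^ (1 + log c / log x) = c * x := by
  rcases hx₀.eq_or_lt with rfl | hx₀
  · simp
  rw [rpow_add hx₀, rpow_one, rpow_def_of_pos hx₀, mul_div_cancel₀ _ (log_neg hx₀ hx₁).ne,
    exp_log hc, mul_comm]

lemma Real.one_add_log_div_log_pos {x c : ℝ} (hx₀ : 0 ≤ x) (hx₁ : x ≤ 1) (hc : 0 < c)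
    (hcx : c * x < 1) : 0 < 1 + log c / log x := by
  rcases eq_or_ne (log x) 0 with h | h
  · simp [h]
  have hlog : log x < 0 := (log_nonpos hx₀ hx₁).lt_of_ne h
  have hx : 0 < x := hx₀.lt_of_ne (by rintro rfl; simp at h)
  rw [one_add_div h, ← log_mul hx.ne' hc.ne']
  exact div_pos_of_neg_of_neg (log_neg (by positivity) (by rwa [mul_comm])) hlog

section TorusScaling

variable {ι E : Type*} [Fintype ι] [NormedAddCommGroup E] [NormedSpace ℝ E]

noncomputable def cosProd (θ : ι → Angle) : ℝ := ∏ j, (1 + (θ j).cos) / 2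

lemma cosProd_nonneg (θ : ι → Angle) : 0 ≤ cosProd θ :=
  Finset.prod_nonneg fun j _ => one_add_cos_div_two_nonneg_s8 (θ j)

lemma continuous_cosProd : Continuous (cosProd : (ι → Angle) → ℝ) :=
  continuous_finsetProd _ fun j _ =>
    (continuous_const.add (Angle.continuous_cos.comp (continuous_apply j))).div_const 2

noncomputable def torusScale (c : ℝ) (p : (ι → Angle) × E) : (ι → Angle) × E :=
  (fun j => angleRpow (1 + log c / log (cosProd p.1)) (p.1 j), √c • p.2)

lemma torusScale_one (p : (ι → Angle) × E) : torusScale 1 p = p := by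
  simp [torusScale, angleRpow_one]

variable {c : ℝ} {p : (ι → Angle) × E}

lemma cosProd_torusScale (hc : 0 < c) (hp : cosProd p.1 < 1) (hcp : c * cosProd p.1 < 1) :
    cosProd (torusScale c p).1 = c * cosProd p.1 := by
  have hs := one_add_log_div_log_pos (cosProd_nonneg p.1) hp.le hc hcp
  calc cosProd (torusScale c p).1
      = ∏ j, ((1 + (p.1 j).cos) / 2) ^ (1 + log c / log (cosProd p.1)) :=
        Finset.prod_congr rfl fun j _ => one_add_cos_angleRpow_div_two hs.le (p.1 j)
    _ = cosProd p.1 ^ (1 + log c / log (cosProd p.1)) :=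
        Real.finsetProd_rpow _ _ (fun j _ => one_add_cos_div_two_nonneg_s8 (p.1 j)) _
    _ = c * cosProd p.1 := rpow_one_add_log_div_log (cosProd_nonneg p.1) hp hc

lemma norm_torusScale_sq (hc : 0 ≤ c) : ‖(torusScale c p).2‖ ^ 2 = c * ‖p.2‖ ^ 2 := by
  rw [torusScale, norm_smul, mul_pow, norm_of_nonneg (sqrt_nonneg c), sq_sqrt hc]

lemma continuousOn_torusScale :
    ContinuousOn (fun q : ℝ × ((ι → Angle) × E) => torusScale q.1 q.2)
      {q | 0 < q.1 ∧ cosProd q.2.1 < 1 ∧ q.1 * cosProd q.2.1 < 1} := by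
  rintro ⟨c, θ, z⟩ ⟨hc, hp, hcp⟩
  refine ContinuousAt.continuousWithinAt ?_
  have hP : Continuous fun q : ℝ × ((ι → Angle) × E) => cosProd q.2.1 :=
    continuous_cosProd.comp (continuous_fst.comp continuous_snd)
  have hs : ContinuousAt (fun q : ℝ × ((ι → Angle) × E) => 1 + log q.1 / log (cosProd q.2.1))
      (c, θ, z) := by
    simp only [div_eq_mul_inv]
    refine continuousAt_const.add (((continuousAt_log hc.ne').comp continuousAt_fst).mul ?_)
    refine (continuousAt_inv_log hp.ne ?_).comp (f := fun q : ℝ × ((ι → Angle) × E) =>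
      cosProd q.2.1) hP.continuousAt
    linarith [cosProd_nonneg θ]
  refine ContinuousAt.prodMk (continuousAt_pi.2 fun j => ?_) ?_
  · have hθj : ContinuousAt (fun q : ℝ × ((ι → Angle) × E) =>
        (1 + log q.1 / log (cosProd q.2.1), q.2.1 j)) (c, θ, z) :=
      hs.prodMk ((continuous_apply j).comp (continuous_fst.comp continuous_snd)).continuousAt
    exact (continuousAt_angleRpow (one_add_log_div_log_pos (cosProd_nonneg θ) hp.le hc hcp)
      (θ j)).comp_of_eq hθj rfl
  · exact (continuous_sqrt.comp continuous_fst).continuousAt.smul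
      (continuous_snd.comp continuous_snd).continuousAt

end TorusScaling

theorem exists_deformation_onto_level_of_scaling {X : Type*} [TopologicalSpace X] {V : X → ℝ}
    (hV : Continuous V) {lam : ℝ} (Φ : ℝ → X → X)
    (hΦ : ContinuousOn (fun q : ℝ × X => Φ q.1 q.2) {q | 1 ≤ q.1 ∧ 0 < V q.2 ∧ q.1 * V q.2 ≤ lam})
    (hVΦ : ∀ c p, 1 ≤ c → 0 < V p → c * V p ≤ lam → V (Φ c p) = c * V p)
    (hΦ_one : ∀ p, Φ 1 p = p) :
    ∃ H : (Set.Icc (0 : ℝ) 1) × (V ⁻¹' Set.Ioc 0 lam) → (V ⁻¹' Set.Ioc 0 lam),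
      Continuous H ∧
      (∀ a, H (⟨0, by norm_num⟩, a) = a) ∧
      (∀ a, V (H (⟨1, by norm_num⟩, a)).1 = lam) ∧
      (∀ t a, V a.1 = lam → H (t, a) = a) := by
  have hratio (a : V ⁻¹' Ioc 0 lam) : 0 < V a ∧ 1 ≤ lam / V a :=
    ⟨a.2.1, (one_le_div a.2.1).2 a.2.2⟩
  have hfactor (t : Icc (0 : ℝ) 1) (a : V ⁻¹' Ioc 0 lam) :
      1 ≤ (lam / V a) ^ (t : ℝ) ∧ (lam / V a) ^ (t : ℝ) * V a ≤ lam := by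
    obtain ⟨ha₀, h₁⟩ := hratio a
    refine ⟨one_le_rpow h₁ t.2.1, ?_⟩
    calc (lam / V a) ^ (t : ℝ) * V a ≤ lam / V a * V a :=
          mul_le_mul_of_nonneg_right (rpow_le_self_of_one_le h₁ t.2.2) ha₀.le
      _ = lam := div_mul_cancel₀ lam ha₀.ne'
  have hV_Φ (t : Icc (0 : ℝ) 1) (a : V ⁻¹' Ioc 0 lam) :
      V (Φ ((lam / V a) ^ (t : ℝ)) a) = (lam / V a) ^ (t : ℝ) * V a :=
    hVΦ _ _ (hfactor t a).1 (hratio a).1 (hfactor t a).2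
  refine ⟨fun q => ⟨Φ ((lam / V q.2) ^ (q.1 : ℝ)) q.2, ?_⟩, ?_, ?_, ?_, ?_⟩
  · rw [mem_preimage, hV_Φ]
    exact ⟨mul_pos (by linarith [(hfactor q.1 q.2).1]) (hratio q.2).1, (hfactor q.1 q.2).2⟩
  · have hcont : Continuous fun q : Icc (0 : ℝ) 1 × V ⁻¹' Ioc 0 lam =>
        ((lam / V q.2) ^ (q.1 : ℝ), (q.2 : X)) := by
      refine Continuous.prodMk (Continuous.rpow ?_ (by fun_prop) fun q => ?_) (by fun_prop)
      · exact continuous_const.div (hV.comp (by fun_prop)) fun q => (hratio q.2).1.ne'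
      · exact Or.inl (by linarith [(hratio q.2).2])
    exact (hΦ.comp_continuous hcont fun q =>
      ⟨(hfactor q.1 q.2).1, (hratio q.2).1, (hfactor q.1 q.2).2⟩).subtype_mk _
  · intro a
    simp [hΦ_one]
  · intro a
    rw [hV_Φ ⟨1, by norm_num⟩ a, rpow_one, div_mul_cancel₀ lam (hratio a).1.ne']
  · intro t a ha
    have hlam : lam ≠ 0 := ha ▸ (hratio a).1.ne'
    exact Subtype.ext (by simp [ha, div_self hlam, hΦ_one])

/-- Let `V(x, z) = ∏ⱼ (1 + cos xⱼ)/2 + ‖z‖²` on `𝕋ⁿ × ℝᵐ` with `𝕋 = ℝ/2πℤ`.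
For `λ ∈ (0, 1)`, the level set `N_λ = V⁻¹({λ})` is a strong deformation retract of
`A' = V⁻¹((0, λ])`. -/
theorem stmt_8 (n m : ℕ) (lam : ℝ) (hlam1 : lam < 1)
    (V : (Fin n → Real.Angle) × (EuclideanSpace ℝ (Fin m)) → ℝ)
    (hV : ∀ p, V p = (∏ j, (1 + Real.Angle.cos (p.1 j)) / 2) + ‖p.2‖ ^ 2) :
    ∃ H : (Set.Icc (0 : ℝ) 1) × (V ⁻¹' Set.Ioc 0 lam) → (V ⁻¹' Set.Ioc 0 lam),
      Continuous H ∧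
      (∀ a, H (⟨0, by norm_num⟩, a) = a) ∧
      (∀ a, V (H (⟨1, by norm_num⟩, a)).1 = lam) ∧
      (∀ t a, V a.1 = lam → H (t, a) = a) := by
  obtain rfl : V = fun p => cosProd p.1 + ‖p.2‖ ^ 2 := funext hV
  have hcont : Continuous fun p : (Fin n → Angle) × EuclideanSpace ℝ (Fin m) =>
      cosProd p.1 + ‖p.2‖ ^ 2 :=
    (continuous_cosProd.comp continuous_fst).add (by fun_prop)
  have hbound {c : ℝ} {p : (Fin n → Angle) × EuclideanSpace ℝ (Fin m)} (hc : 1 ≤ c)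
      (hp : 0 < cosProd p.1 + ‖p.2‖ ^ 2) (hcp : c * (cosProd p.1 + ‖p.2‖ ^ 2) ≤ lam) :
      cosProd p.1 < 1 ∧ c * cosProd p.1 < 1 := by
    have hle : cosProd p.1 ≤ cosProd p.1 + ‖p.2‖ ^ 2 := le_add_of_nonneg_right (sq_nonneg _)
    exact ⟨hle.trans_lt ((le_mul_of_one_le_left hp.le hc).trans_lt (hcp.trans_lt hlam1)),
      (mul_le_mul_of_nonneg_left hle (by linarith)).trans_lt (hcp.trans_lt hlam1)⟩
  refine exists_deformation_onto_level_of_scaling hcont torusScale ?_ ?_ torusScale_one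
  · exact continuousOn_torusScale.mono fun q ⟨hc, hp, hcp⟩ =>
      ⟨by linarith, hbound hc hp hcp⟩
  · intro c p hc hp hcp
    obtain ⟨hp₁, hcp₁⟩ := hbound hc hp hcp
    rw [cosProd_torusScale (by linarith) hp₁ hcp₁, norm_torusScale_sq (by linarith)]
    ring
end
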